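/- arXiv:1512.03601 — 4 statements merged into one kernel-verified Lean document; each statement's English description precedes it below -/
import Mathlib

section
/- The iterated integral coefficients satisfy the Chen two-parameter group property under convolution: for all s, t, t₀ ∈ ℝ, α(t₀; t₀) = 𝟙 and α(s; t₀) ⋆ α(t; s) = α(t; t₀). -/
noncomputable def conv {A : Type*} (δ δ' : List A → ℂ) : List A → ℂ :=
  fun w => ∑ j ∈ Finset.range (w.length + 1), δ (w.take j) * δ' (w.drop j)

noncomputable def convOne {A : Type*} [DecidableEq A] : List A → ℂ :=
  fun w => if w = [] then 1 else 0

noncomputable def iterInt {A : Type*} (lam : A → ℝ → ℂ) (t₀ : ℝ) : List A → ℝ → ℂ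
  | [] => fun _ => 1
  | l :: w => fun t => ∫ s in t₀..t, lam l s * iterInt lam t₀ w s

noncomputable def alphaCoef {A : Type*} (lam : A → ℝ → ℂ) (t₀ : ℝ)
    (w : List A) (t : ℝ) : ℂ :=
  iterInt lam t₀ w.reverse t

/-! Split the outermost integral as `∫_{t₀}^{t} = ∫_{t₀}^{s} + ∫_{s}^{t}`. The first piece is the
`j = 0` term of the convolution; on `[s, t]` the inner iterated integral expands, by induction on
the word, into the remaining terms. Since `alphaCoef` lists the letters innermost first, the
convolution sum is finally reindexed by `j ↦ n - j`. -/

open Finset MeasureTheory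

section

variable {A : Type*}

lemma conv_comp_reverse (f g : List A → ℂ) (w : List A) :
    conv (fun w => f w.reverse) (fun w => g w.reverse) w =
      ∑ j ∈ range (w.length + 1), g (w.reverse.take j) * f (w.reverse.drop j) := by
  rw [conv, ← sum_range_reflect]
  refine sum_congr rfl fun j hj => ?_
  have hreflect : w.length - (w.length + 1 - 1 - j) = j := by
    rw [mem_range] at hj
    omega
  rw [List.reverse_take, List.reverse_drop, mul_comm, hreflect]

variable (lam : A → ℝ → ℂ)

lemma iterInt_self (t₀ : ℝ) : ∀ v : List A, iterInt lam t₀ v t₀ = if v = [] then 1 else 0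
  | [] => rfl
  | _ :: _ => by simp [iterInt]

variable {lam} (hlam : ∀ l, Continuous (lam l))
include hlam

lemma continuous_iterInt (t₀ : ℝ) : ∀ v : List A, Continuous (iterInt lam t₀ v)
  | [] => continuous_const
  | l :: v =>
    intervalIntegral.continuous_primitive
      (fun a b => ((hlam l).mul (continuous_iterInt t₀ v)).intervalIntegrable a b) t₀

lemma iterInt_eq_sum_take_mul_drop (t₀ s t : ℝ) (v : List A) :
    iterInt lam t₀ v t =
      ∑ j ∈ range (v.length + 1), iterInt lam s (v.take j) t * iterInt lam t₀ (v.drop j) s := by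
  induction v generalizing t with
  | nil => simp [iterInt]
  | cons l v ih =>
    have hint : ∀ a b, IntervalIntegrable (fun r => lam l r * iterInt lam t₀ v r) volume a b :=
      fun a b => ((hlam l).mul (continuous_iterInt hlam t₀ v)).intervalIntegrable a b
    have htail : ∫ r in s..t, lam l r * iterInt lam t₀ v r =
        ∑ j ∈ range (v.length + 1), iterInt lam s (l :: v.take j) t * iterInt lam t₀ (v.drop j) s := by
      calc ∫ r in s..t, lam l r * iterInt lam t₀ v r
          = ∫ r in s..t, ∑ j ∈ range (v.length + 1),
              lam l r * iterInt lam s (v.take j) r * iterInt lam t₀ (v.drop j) s :=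
            intervalIntegral.integral_congr fun r _ => by simp only [ih r, mul_sum, mul_assoc]
        _ = _ := by
            have hcont (j : ℕ) : Continuous fun r =>
                lam l r * iterInt lam s (v.take j) r * iterInt lam t₀ (v.drop j) s :=
              ((hlam l).mul (continuous_iterInt hlam s _)).mul continuous_const
            rw [intervalIntegral.integral_finsetSum fun j _ => (hcont j).intervalIntegrable s t]
            simp only [iterInt, intervalIntegral.integral_mul_const]
    rw [List.length_cons, sum_range_succ', add_comm]
    simp only [List.take_succ_cons, List.drop_succ_cons, List.take_zero, List.drop_zero, ← htail]
    simp only [iterInt, one_mul]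
    exact (intervalIntegral.integral_add_adjacent_intervals (hint t₀ s) (hint s t)).symm

end

/-- Chen's two-parameter group property of the iterated-integral coefficients. -/
theorem alphaCoef_chen {A : Type*} [DecidableEq A] (lam : A → ℝ → ℂ)
    (hlam : ∀ l, Continuous (lam l)) (s t t₀ : ℝ) :
    (fun w => alphaCoef lam t₀ w t₀) = convOne ∧
    conv (fun w => alphaCoef lam t₀ w s) (fun w => alphaCoef lam s w t) =
      fun w => alphaCoef lam t₀ w t := by
  refine ⟨funext fun w => ?_, funext fun w => ?_⟩
  · simp [alphaCoef, convOne, iterInt_self]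
  · rw [alphaCoef, iterInt_eq_sum_take_mul_drop hlam t₀ s t, List.length_reverse]
    exact conv_comp_reverse (fun v => iterInt lam t₀ v s) (fun v => iterInt lam s v t) w
end

section
/- The iterated integral coefficients satisfy the shuffle relations: for all words w, w', α_w(t;t₀) α_{w'}(t;t₀) = Σⱼ α_{wⱼ}(t;t₀) whenever w ⧢ w' = Σⱼ wⱼ; that is, for each t, t₀, the element α(t;t₀) belongs to the group G of shuffle characters. -/
def shuffle {A : Type*} : List A → List A → Multiset (List A)
  | [], w => {w}
  | l :: w, [] => {l :: w}
  | a :: w, b :: w' =>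
      ((shuffle w (b :: w')).map (a :: ·)) + ((shuffle (a :: w) w').map (b :: ·))
  termination_by w w' => w.length + w'.length

def IsShuffleChar {A : Type*} (γ : List A → ℂ) : Prop :=
  γ [] = 1 ∧ ∀ w w' : List A, γ w * γ w' = ((shuffle w w').map γ).sum

lemma shuffle_nil_left {A : Type*} (w : List A) : shuffle [] w = {w} := by
  simp [shuffle]

lemma shuffle_nil_right {A : Type*} (w : List A) : shuffle w [] = {w} := by
  cases w <;> simp [shuffle]

lemma shuffle_snoc {A : Type*} (a b : A) :
    ∀ w w' : List A, shuffle (w ++ [a]) (w' ++ [b]) =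
      ((shuffle w (w' ++ [b])).map (· ++ [a])) + ((shuffle (w ++ [a]) w').map (· ++ [b]))
  | [], [] => by
      simp only [List.nil_append, shuffle, Multiset.map_singleton, List.singleton_append]
      exact add_comm _ _
  | [], c :: w' => by
      have IH := shuffle_snoc a b [] w'
      simp only [List.nil_append, List.cons_append, shuffle] at *
      rw [IH]
      simp [Multiset.map_map, Function.comp, shuffle, shuffle_nil_left, shuffle_nil_right, List.append_assoc]
      exact Multiset.cons_swap _ _ _
  | c :: w, [] => by
      have IH := shuffle_snoc a b w []
      simp only [List.nil_append, List.cons_append, shuffle] at *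
      rw [IH]
      simp [Multiset.map_map, Function.comp, shuffle, shuffle_nil_left, shuffle_nil_right, List.append_assoc]
      try abel
  | c :: w, d :: w' => by
      have IH1 := shuffle_snoc a b w (d :: w')
      have IH2 := shuffle_snoc a b (c :: w) w'
      simp only [List.cons_append, shuffle] at *
      rw [IH1, IH2]
      simp [Multiset.map_map, Function.comp, shuffle, shuffle_nil_left, shuffle_nil_right, List.append_assoc]
      try abel
  termination_by w w' => w.length + w'.length

section
variable {A : Type*} (lam : A → ℝ → ℂ) (t₀ : ℝ)

lemma iterInt_continuous (hlam : ∀ l, Continuous (lam l)) :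
    ∀ w : List A, Continuous (iterInt lam t₀ w)
  | [] => continuous_const
  | l :: w => by
      have h : Continuous fun s => lam l s * iterInt lam t₀ w s :=
        (hlam l).mul (iterInt_continuous hlam w)
      have : Continuous fun t => ∫ s in t₀..t, lam l s * iterInt lam t₀ w s :=
        continuous_iff_continuousAt.2 fun t =>
          (h.integral_hasStrictDerivAt t₀ t).hasDerivAt.continuousAt
      exact this

lemma alphaCoef_continuous (hlam : ∀ l, Continuous (lam l)) (w : List A) :
    Continuous (alphaCoef lam t₀ w) :=
  iterInt_continuous lam t₀ hlam w.reverse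

lemma alphaCoef_snoc (w : List A) (a : A) (t : ℝ) :
    alphaCoef lam t₀ (w ++ [a]) t = ∫ s in t₀..t, lam a s * alphaCoef lam t₀ w s := by
  simp [alphaCoef, iterInt]

lemma alphaCoef_snoc_hasDerivAt (hlam : ∀ l, Continuous (lam l)) (w : List A) (a : A) (t : ℝ) :
    HasDerivAt (alphaCoef lam t₀ (w ++ [a])) (lam a t * alphaCoef lam t₀ w t) t := by
  have h : Continuous fun s => lam a s * alphaCoef lam t₀ w s :=
    (hlam a).mul (alphaCoef_continuous lam t₀ hlam w)
  have := (h.integral_hasStrictDerivAt t₀ t).hasDerivAt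
  apply this.congr_of_eventuallyEq
  filter_upwards with s
  exact alphaCoef_snoc lam t₀ w a s

lemma sum_continuous (hlam : ∀ l, Continuous (lam l)) (S : Multiset (List A)) :
    Continuous fun s => (S.map (fun u => alphaCoef lam t₀ u s)).sum := by
  induction S using Multiset.induction_on with
  | empty => simp; exact continuous_const
  | cons u S ih =>
      simp only [Multiset.map_cons, Multiset.sum_cons]
      exact (alphaCoef_continuous lam t₀ hlam u).add ih

lemma integral_msum (hlam : ∀ l, Continuous (lam l)) (a : A) (S : Multiset (List A)) (t : ℝ) :
    ∫ s in t₀..t, lam a s * (S.map (fun u => alphaCoef lam t₀ u s)).sum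
      = (S.map (fun u => ∫ s in t₀..t, lam a s * alphaCoef lam t₀ u s)).sum := by
  induction S using Multiset.induction_on with
  | empty => simp
  | cons u S ih =>
      simp only [Multiset.map_cons, Multiset.sum_cons, mul_add]
      rw [intervalIntegral.integral_add, ih]
      · exact ((hlam a).mul (alphaCoef_continuous lam t₀ hlam u)).intervalIntegrable _ _
      · exact ((hlam a).mul (sum_continuous lam t₀ hlam S)).intervalIntegrable _ _

end

lemma key {A : Type*} (lam : A → ℝ → ℂ) (t₀ : ℝ) (hlam : ∀ l, Continuous (lam l)) :
    ∀ n : ℕ, ∀ w w' : List A, w.length + w'.length = n → ∀ t : ℝ,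
      alphaCoef lam t₀ w t * alphaCoef lam t₀ w' t
        = ((shuffle w w').map (fun u => alphaCoef lam t₀ u t)).sum := by
  intro n
  induction n using Nat.strong_induction_on with
  | _ n IH =>
    intro w w' hn t
    rcases List.eq_nil_or_concat w with rfl | ⟨v, a, rfl⟩
    · simp [shuffle_nil_left, alphaCoef, iterInt]
    rcases List.eq_nil_or_concat w' with rfl | ⟨v', b, rfl⟩
    · simp [shuffle_nil_right, alphaCoef, iterInt]
    simp only [List.concat_eq_append] at hn ⊢
    have hn1 : v.length + (v' ++ [b]).length < n := by
      simp only [List.length_append, List.length_singleton] at hn ⊢; omega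
    have hn2 : (v ++ [a]).length + v'.length < n := by
      simp only [List.length_append, List.length_singleton] at hn ⊢; omega
    have h1 : ∀ s : ℝ, alphaCoef lam t₀ v s * alphaCoef lam t₀ (v' ++ [b]) s
        = ((shuffle v (v' ++ [b])).map (fun u => alphaCoef lam t₀ u s)).sum :=
      fun s => IH _ hn1 v (v' ++ [b]) rfl s
    have h2 : ∀ s : ℝ, alphaCoef lam t₀ (v ++ [a]) s * alphaCoef lam t₀ v' s
        = ((shuffle (v ++ [a]) v').map (fun u => alphaCoef lam t₀ u s)).sum :=
      fun s => IH _ hn2 (v ++ [a]) v' rfl s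
    have hderiv : ∀ s ∈ Set.uIcc t₀ t, HasDerivAt (fun x =>
          alphaCoef lam t₀ (v ++ [a]) x * alphaCoef lam t₀ (v' ++ [b]) x)
        (lam a s * alphaCoef lam t₀ v s * alphaCoef lam t₀ (v' ++ [b]) s
          + alphaCoef lam t₀ (v ++ [a]) s * (lam b s * alphaCoef lam t₀ v' s)) s :=
      fun s _ => (alphaCoef_snoc_hasDerivAt lam t₀ hlam v a s).mul
        (alphaCoef_snoc_hasDerivAt lam t₀ hlam v' b s)
    have hc1 : Continuous fun s => lam a s * alphaCoef lam t₀ v s * alphaCoef lam t₀ (v' ++ [b]) s :=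
      ((hlam a).mul (alphaCoef_continuous lam t₀ hlam v)).mul
        (alphaCoef_continuous lam t₀ hlam (v' ++ [b]))
    have hc2 : Continuous fun s => alphaCoef lam t₀ (v ++ [a]) s * (lam b s * alphaCoef lam t₀ v' s) :=
      (alphaCoef_continuous lam t₀ hlam (v ++ [a])).mul
        ((hlam b).mul (alphaCoef_continuous lam t₀ hlam v'))
    have heq := intervalIntegral.integral_eq_sub_of_hasDerivAt hderiv
      ((hc1.add hc2).intervalIntegrable t₀ t)
    have h0 : alphaCoef lam t₀ (v ++ [a]) t₀ * alphaCoef lam t₀ (v' ++ [b]) t₀ = 0 := by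
      simp [alphaCoef_snoc]
    rw [h0, sub_zero] at heq
    rw [← heq, intervalIntegral.integral_add (hc1.intervalIntegrable t₀ t)
      (hc2.intervalIntegrable t₀ t)]
    have e1 : (∫ s in t₀..t, lam a s * alphaCoef lam t₀ v s * alphaCoef lam t₀ (v' ++ [b]) s)
        = ((shuffle v (v' ++ [b])).map (fun u => alphaCoef lam t₀ (u ++ [a]) t)).sum := by
      have : ∀ s : ℝ, lam a s * alphaCoef lam t₀ v s * alphaCoef lam t₀ (v' ++ [b]) s
          = lam a s * ((shuffle v (v' ++ [b])).map (fun u => alphaCoef lam t₀ u s)).sum := by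
        intro s; rw [mul_assoc, h1 s]
      simp_rw [this, integral_msum lam t₀ hlam]
      congr 1
      exact Multiset.map_congr rfl fun u _ => (alphaCoef_snoc lam t₀ u a t).symm
    have e2 : (∫ s in t₀..t, alphaCoef lam t₀ (v ++ [a]) s * (lam b s * alphaCoef lam t₀ v' s))
        = ((shuffle (v ++ [a]) v').map (fun u => alphaCoef lam t₀ (u ++ [b]) t)).sum := by
      have : ∀ s : ℝ, alphaCoef lam t₀ (v ++ [a]) s * (lam b s * alphaCoef lam t₀ v' s)
          = lam b s * ((shuffle (v ++ [a]) v').map (fun u => alphaCoef lam t₀ u s)).sum := by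
        intro s; rw [← h2 s]; ring
      simp_rw [this, integral_msum lam t₀ hlam]
      congr 1
      exact Multiset.map_congr rfl fun u _ => (alphaCoef_snoc lam t₀ u b t).symm
    rw [e1, e2, shuffle_snoc, Multiset.map_add, Multiset.sum_add,
      Multiset.map_map, Multiset.map_map]
    rfl

/-- The iterated-integral coefficients satisfy the shuffle relations. -/
theorem alphaCoef_isShuffleChar {A : Type*} (lam : A → ℝ → ℂ)
    (hlam : ∀ l, Continuous (lam l)) (t t₀ : ℝ) :
    IsShuffleChar (fun w => alphaCoef lam t₀ w t) := by
  constructor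
  · simp [alphaCoef, iterInt]
  · intro w w'
    exact key lam t₀ hlam _ w w' rfl t
end

section
/- For a nonresonant vector ω ∈ ℝ^d, if a smooth function z : ℝ × 𝕋^d → ℂ satisfies the transport equation ∂z/∂τ + ω·∇_θ z = 0 together with z(0,θ₀) = 0, and z(τ,θ) is polynomial in τ (for each θ, z(·,θ) is a polynomial of uniformly bounded degree with coefficients smooth in θ), then z ≡ 0. -/
open Real

open Topology

/-- Nonresonance: `k·ω ≠ 0` for every nonzero integer multiindex `k`. -/
def Nonresonant {d : ℕ} (ω : Fin d → ℝ) : Prop :=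
  ∀ k : Fin d → ℤ, (∑ j, (k j : ℝ) * ω j) = 0 → k = 0


-- Lemma 1: constancy along characteristics
theorem char_const {d : ℕ} (ω : Fin d → ℝ) (z : ℝ → (Fin d → ℝ) → ℂ)
    (hpde : ∀ (τ : ℝ) (θ : Fin d → ℝ),
      HasDerivAt (fun s : ℝ => z (τ + s) (θ + s • ω)) 0 0) :
    ∀ (τ : ℝ) (θ : Fin d → ℝ), z τ θ = z 0 (θ - τ • ω) := by
  intro τ θ
  set g : ℝ → ℂ := fun s => z s (θ - τ • ω + s • ω) with hg
  have hderiv : ∀ s, HasDerivAt g 0 s := by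
    intro s
    have h1 : HasDerivAt (fun h : ℝ => z (s + h) ((θ - τ • ω + s • ω) + h • ω)) 0 0 :=
      hpde s (θ - τ • ω + s • ω)
    have h1' : HasDerivAt (fun h : ℝ => g (s + h)) 0 0 := by
      have e : (fun h : ℝ => g (s + h))
          = fun h : ℝ => z (s + h) ((θ - τ • ω + s • ω) + h • ω) := by
        funext x; simp only [g]; rw [add_smul, add_assoc]
      rw [e]; exact h1
    have h2 : HasDerivAt (fun x : ℝ => g (s + (x - s))) 0 s :=
      HasDerivAt.comp_sub_const s s (by simpa using h1')
    have h3 : (fun x : ℝ => g (s + (x - s))) = g := by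
      funext x; congr 1; ring
    rwa [h3] at h2
  have hconst := is_const_of_deriv_eq_zero (fun x => (hderiv x).differentiableAt)
    (fun x => (hderiv x).deriv) τ 0
  simpa [g] using hconst

-- Lemma 2: bounded polynomial is constant
theorem bounded_poly_const {n : ℕ} (a : Fin (n + 1) → ℂ) (C : ℝ)
    (h : ∀ τ : ℝ, ‖∑ i, a i * (τ : ℂ) ^ (i : ℕ)‖ ≤ C) :
    ∀ τ : ℝ, (∑ i, a i * (τ : ℂ) ^ (i : ℕ)) = ∑ i, a i * (0 : ℂ) ^ (i : ℕ) := by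
  have ere : ∀ (w : ℂ) (σ : ℝ) (m : ℕ), (w * (σ : ℂ) ^ m).re = w.re * σ ^ m := by
    intro w σ m; simp [Complex.mul_re, ← Complex.ofReal_pow]
  have eim : ∀ (w : ℂ) (σ : ℝ) (m : ℕ), (w * (σ : ℂ) ^ m).im = w.im * σ ^ m := by
    intro w σ m; simp [Complex.mul_im, ← Complex.ofReal_pow]
  have key : ∀ b : Fin (n + 1) → ℝ, (∀ τ : ℝ, |∑ i, b i * τ ^ (i : ℕ)| ≤ C) →
      ∀ τ : ℝ, (∑ i, b i * τ ^ (i : ℕ)) = ∑ i, b i * (0 : ℝ) ^ (i : ℕ) := by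
    intro b hb
    set P : Polynomial ℝ := ∑ i : Fin (n + 1), Polynomial.C (b i) * Polynomial.X ^ (i : ℕ) with hP
    have hev : ∀ τ : ℝ, P.eval τ = ∑ i, b i * τ ^ (i : ℕ) := by
      intro τ; simp [hP, Polynomial.eval_finset_sum]
    have hdeg : P.degree ≤ 0 := by
      rw [← Polynomial.abs_isBoundedUnder_iff]
      refine ⟨C, Filter.eventually_map.mpr (Filter.Eventually.of_forall fun τ => ?_)⟩
      rw [hev]; exact hb τ
    have hr := Polynomial.degree_le_zero_iff.mp hdeg
    intro τ
    rw [← hev, ← hev, hr, Polynomial.eval_C, Polynomial.eval_C]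
  intro τ
  have hzc : (0 : ℂ) = ((0 : ℝ) : ℂ) := by norm_num
  have hre := key (fun i => (a i).re) (fun τ => by
    calc |∑ i, (a i).re * τ ^ (i : ℕ)| = |(∑ i, a i * (τ : ℂ) ^ (i : ℕ)).re| := by
          rw [Complex.re_sum]; simp only [ere]
      _ ≤ ‖∑ i, a i * (τ : ℂ) ^ (i : ℕ)‖ := Complex.abs_re_le_norm _
      _ ≤ C := h τ) τ
  have him := key (fun i => (a i).im) (fun τ => by
    calc |∑ i, (a i).im * τ ^ (i : ℕ)| = |(∑ i, a i * (τ : ℂ) ^ (i : ℕ)).im| := by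
          rw [Complex.im_sum]; simp only [eim]
      _ ≤ ‖∑ i, a i * (τ : ℂ) ^ (i : ℕ)‖ := Complex.abs_im_le_norm _
      _ ≤ C := h τ) τ
  apply Complex.ext
  · rw [Complex.re_sum, Complex.re_sum]
    simp only [hzc, ere]
    exact hre
  · rw [Complex.im_sum, Complex.im_sum]
    simp only [hzc, eim]
    exact him


-- integer lattice invariance
theorem lattice_invariance {d : ℕ} (f : (Fin d → ℝ) → ℂ)
    (hper : ∀ (θ : Fin d → ℝ) (j : Fin d), f (θ + (2 * π) • (Pi.single j 1 : Fin d → ℝ)) = f θ) :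
    ∀ (m : Fin d → ℤ) (θ : Fin d → ℝ), f (fun j => θ j + (m j : ℝ) * (2 * π)) = f θ := by
  have single : ∀ (n : ℤ) (j : Fin d) (θ : Fin d → ℝ),
      f (θ + n • ((2 * π) • (Pi.single j 1 : Fin d → ℝ))) = f θ := by
    intro n
    induction n using Int.induction_on with
    | zero => intro j θ; simp
    | succ k ih =>
      intro j θ
      have : θ + ((k : ℤ) + 1) • ((2 * π) • (Pi.single j 1 : Fin d → ℝ))
          = (θ + (k : ℤ) • ((2 * π) • (Pi.single j 1 : Fin d → ℝ)))
            + (2 * π) • (Pi.single j 1 : Fin d → ℝ) := by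
        rw [add_smul, one_smul, add_assoc]
      rw [this, hper, ih]
    | pred k ih =>
      intro j θ
      have key := hper (θ + (-(k : ℤ) - 1) • ((2 * π) • (Pi.single j 1 : Fin d → ℝ))) j
      have e : θ + (-(k : ℤ) - 1) • ((2 * π) • (Pi.single j 1 : Fin d → ℝ))
            + (2 * π) • (Pi.single j 1 : Fin d → ℝ)
          = θ + (-(k : ℤ)) • ((2 * π) • (Pi.single j 1 : Fin d → ℝ)) := by
        rw [sub_smul, one_smul, add_assoc]; ring_nf
      rw [e] at key
      rw [← key]; exact ih j θ
  have main : ∀ (s : Finset (Fin d)) (m : Fin d → ℤ) (θ : Fin d → ℝ),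
      f (θ + ∑ j ∈ s, (m j) • ((2 * π) • (Pi.single j 1 : Fin d → ℝ))) = f θ := by
    intro s
    induction s using Finset.induction_on with
    | empty => intro m θ; simp
    | insert j s hj ih =>
      intro m θ
      rw [Finset.sum_insert hj, ← add_assoc, ih m]; exact single (m j) j θ
  intro m θ
  have e : (fun j => θ j + (m j : ℝ) * (2 * π))
      = θ + ∑ j, (m j) • ((2 * π) • (Pi.single j 1 : Fin d → ℝ)) := by
    funext j
    have hs : (∑ j', (m j') • ((2 * π) • (Pi.single j' 1 : Fin d → ℝ))) j
        = ∑ j', (m j' : ℝ) * (2 * π * (Pi.single j' 1 : Fin d → ℝ) j) := by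
      rw [Finset.sum_apply]
      exact Finset.sum_congr rfl fun j' _ => by simp [zsmul_eq_mul]
    rw [Pi.add_apply, hs, Finset.sum_eq_single j]
    · simp
    · intro b _ hb; simp [Pi.single_apply, Ne.symm hb]
    · simp
  rw [e, main]

-- boundedness of continuous lattice-periodic function
theorem periodic_bounded {d : ℕ} (f : (Fin d → ℝ) → ℂ) (hf : Continuous f)
    (hper : ∀ (θ : Fin d → ℝ) (j : Fin d), f (θ + (2 * π) • (Pi.single j 1 : Fin d → ℝ)) = f θ) :
    ∃ C : ℝ, ∀ θ, ‖f θ‖ ≤ C := by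
  have hlat := lattice_invariance f hper
  obtain ⟨C, hC⟩ := (isCompact_Icc (a := (0 : Fin d → ℝ)) (b := fun _ => 2 * π)).exists_bound_of_continuousOn hf.continuousOn
  refine ⟨C, fun θ => ?_⟩
  have e1 : f θ = f (fun j => θ j + ((-⌊θ j / (2 * π)⌋ : ℤ) : ℝ) * (2 * π)) :=
    (hlat (fun j => -⌊θ j / (2 * π)⌋) θ).symm
  rw [e1]
  apply hC
  rw [Set.mem_Icc]
  have h2π : (0:ℝ) < 2 * π := by positivity
  have e2 : ∀ j, θ j + ((-⌊θ j / (2 * π)⌋ : ℤ) : ℝ) * (2 * π)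
      = Int.fract (θ j / (2 * π)) * (2 * π) := by
    intro j
    rw [Int.fract, sub_mul, div_mul_cancel₀ _ (ne_of_gt h2π)]
    push_cast; ring
  constructor <;> intro j
  · show (0 : ℝ) ≤ θ j + ((-⌊θ j / (2 * π)⌋ : ℤ) : ℝ) * (2 * π)
    rw [e2 j]
    have := Int.fract_nonneg (θ j / (2 * π))
    positivity
  · show θ j + ((-⌊θ j / (2 * π)⌋ : ℤ) : ℝ) * (2 * π) ≤ 2 * π
    rw [e2 j]
    have hlt := Int.fract_lt_one (θ j / (2 * π))
    calc Int.fract (θ j / (2 * π)) * (2 * π) ≤ 1 * (2 * π) :=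
          mul_le_mul_of_nonneg_right hlt.le h2π.le
      _ = 2 * π := one_mul _

theorem flow_invariant_const {d : ℕ} (ω : Fin d → ℝ)
    (hω : ∀ k : Fin d → ℤ, (∑ j, (k j : ℝ) * ω j) = 0 → k = 0)
    (f : (Fin d → ℝ) → ℂ) (hf : Continuous f)
    (hper : ∀ (θ : Fin d → ℝ) (j : Fin d), f (θ + (2 * π) • (Pi.single j 1 : Fin d → ℝ)) = f θ)
    (hflow : ∀ (τ : ℝ) (θ : Fin d → ℝ), f (θ - τ • ω) = f θ) :
    ∀ θ θ' : Fin d → ℝ, f θ = f θ' := by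
  have h2π : (0:ℝ) < 2 * π := by positivity
  haveI : Fact ((0:ℝ) < 2 * π) := ⟨h2π⟩
  have hlat := lattice_invariance f hper
  -- the torus and the quotient map
  set q : (Fin d → ℝ) → (Fin d → AddCircle (2 * π)) :=
    fun θ j => (θ j : AddCircle (2 * π)) with hq
  have hq_cont : Continuous q :=
    continuous_pi fun j => (AddCircle.continuous_mk' _).comp (continuous_apply j)
  have hq_surj : Function.Surjective q :=
    Function.Surjective.piMap fun j => Quotient.exists_rep
  have hq_open : IsOpenMap q :=
    IsOpenMap.piMap (fun j => QuotientAddGroup.isOpenMap_coe)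
      (Filter.Eventually.of_forall fun j => Quotient.exists_rep)
  have hq_quot : IsQuotientMap q := hq_open.isQuotientMap hq_cont hq_surj
  -- descent of f to the torus
  set F : (Fin d → AddCircle (2 * π)) → ℂ :=
    fun x => f (fun j => ((AddCircle.equivIco (2 * π) 0 (x j) : ℝ))) with hF
  have hFq : ∀ θ, F (q θ) = f θ := by
    intro θ
    have e1 : (fun j => ((AddCircle.equivIco (2 * π) 0 (q θ j) : ℝ)))
        = fun j => θ j + ((-⌊θ j / (2 * π)⌋ : ℤ) : ℝ) * (2 * π) := by
      funext j
      rw [hq]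
      rw [AddCircle.coe_equivIco_mk_apply]
      rw [Int.fract, sub_mul, div_mul_cancel₀ _ (ne_of_gt h2π)]
      push_cast; ring
    rw [hF]
    simp only [e1]
    exact hlat _ θ
  have hFcont : Continuous F := by
    rw [hq_quot.continuous_iff]
    have : F ∘ q = f := funext hFq
    rw [this]; exact hf
  -- characters
  set e : (Fin d → ℤ) → C((Fin d → AddCircle (2 * π)), ℂ) :=
    fun k => ⟨fun x => ∏ j, ((AddCircle.toCircle (k j • x j) : Circle) : ℂ), by
      refine continuous_finset_prod _ fun j _ => ?_
      exact continuous_subtype_val.comp ((AddCircle.continuous_toCircle).comp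
        ((continuous_zsmul (k j)).comp (continuous_apply j)))⟩ with he
  have hek_q : ∀ (k : Fin d → ℤ) (ψ : Fin d → ℝ),
      e k (q ψ) = Complex.exp ((↑(∑ j, (k j : ℝ) * ψ j)) * Complex.I) := by
    intro k ψ
    have e1 : ∀ j, ((AddCircle.toCircle (k j • (q ψ j)) : Circle) : ℂ)
        = Complex.exp ((↑((k j : ℝ) * ψ j)) * Complex.I) := by
      intro j
      have e2 : (k j) • (q ψ j) = (((k j : ℝ) * ψ j : ℝ) : AddCircle (2 * π)) := by
        rw [hq]
        rw [← AddCircle.coe_zsmul]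
        rw [← zsmul_eq_mul]
      rw [e2, AddCircle.toCircle_apply_mk]
      rw [div_self (ne_of_gt h2π), one_mul]
      rw [Circle.coe_exp]
    rw [he]
    simp only [ContinuousMap.coe_mk]
    rw [Finset.prod_congr rfl (fun j _ => e1 j), ← Complex.exp_sum]
    congr 1
    rw [← Finset.sum_mul]
    congr 1
    push_cast
    rfl
  -- the span of the characters
  set M : Submodule ℂ C((Fin d → AddCircle (2 * π)), ℂ) := Submodule.span ℂ (Set.range e) with hM
  have hmul_ek : ∀ k l, e k * e l = e (k + l) := by
    intro k l
    ext x
    simp only [he, ContinuousMap.mul_apply, ContinuousMap.coe_mk]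
    rw [← Finset.prod_mul_distrib]
    refine Finset.prod_congr rfl fun j _ => ?_
    rw [← Circle.coe_mul, ← AddCircle.toCircle_add, ← add_zsmul]
    rfl
  have hone : (1 : C((Fin d → AddCircle (2 * π)), ℂ)) ∈ M := by
    have : e 0 = 1 := by
      ext x
      simp [he]
    rw [← this]
    exact Submodule.subset_span ⟨0, rfl⟩
  have hgen_mul : ∀ (k : Fin d → ℤ), ∀ y ∈ M, e k * y ∈ M := by
    intro k y hy
    induction hy using Submodule.span_induction with
    | mem g hg =>
      obtain ⟨l, rfl⟩ := hg
      rw [hmul_ek]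
      exact Submodule.subset_span ⟨k + l, rfl⟩
    | zero => rw [mul_zero]; exact M.zero_mem
    | add a b _ _ ha hb => rw [mul_add]; exact M.add_mem ha hb
    | smul c a _ ha => rw [mul_smul_comm]; exact M.smul_mem c ha
  have hmulM : ∀ x ∈ M, ∀ y ∈ M, x * y ∈ M := by
    intro x hx
    induction hx using Submodule.span_induction with
    | mem g hg =>
      obtain ⟨l, rfl⟩ := hg
      exact hgen_mul l
    | zero => intro y hy; rw [zero_mul]; exact M.zero_mem
    | add a b _ _ ha hb => intro y hy; rw [add_mul]; exact M.add_mem (ha y hy) (hb y hy)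
    | smul c a _ ha => intro y hy; rw [smul_mul_assoc]; exact M.smul_mem c (ha y hy)
  have hstarM : ∀ x ∈ M, star x ∈ M := by
    intro x hx
    induction hx using Submodule.span_induction with
    | mem g hg =>
      obtain ⟨l, rfl⟩ := hg
      have : star (e l) = e (-l) := by
        ext x
        obtain ⟨ψ, rfl⟩ := hq_surj x
        rw [ContinuousMap.star_apply, hek_q, hek_q]
        rw [Complex.star_def, ← Complex.exp_conj]
        rw [map_mul, Complex.conj_I, Complex.conj_ofReal]
        congr 1
        push_cast [Pi.neg_apply]
        simp only [neg_mul, Finset.sum_neg_distrib]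
        ring
      rw [this]
      exact Submodule.subset_span ⟨-l, rfl⟩
    | zero => rw [star_zero]; exact M.zero_mem
    | add a b _ _ ha hb => rw [star_add]; exact M.add_mem ha hb
    | smul c a _ ha => rw [star_smul]; exact M.smul_mem _ ha
  -- the star subalgebra
  set A : StarSubalgebra ℂ C((Fin d → AddCircle (2 * π)), ℂ) :=
    { toSubalgebra := M.toSubalgebra hone (fun x y hx hy => hmulM x hx y hy)
      star_mem' := fun hx => hstarM _ hx } with hA
  have hA_mem : ∀ x, x ∈ A ↔ x ∈ M := fun x => Iff.rfl
  -- separation of points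
  have hsingle : ∀ (j : Fin d) (x : Fin d → AddCircle (2 * π)),
      e (Pi.single j 1) x = ((AddCircle.toCircle (x j) : Circle) : ℂ) := by
    intro j x
    rw [he]
    simp only [ContinuousMap.coe_mk]
    rw [Finset.prod_eq_single j]
    · rw [Pi.single_eq_same, one_zsmul]
    · intro b _ hb
      rw [Pi.single_eq_of_ne hb, zero_zsmul, AddCircle.toCircle_zero, Circle.coe_one]
    · intro h; exact absurd (Finset.mem_univ j) h
  have hsep : A.SeparatesPoints := by
    intro x y hxy
    have : ∃ j, x j ≠ y j := by
      by_contra hc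
      push_neg at hc
      exact hxy (funext hc)
    obtain ⟨j, hj⟩ := this
    refine ⟨e (Pi.single j 1), ⟨e (Pi.single j 1),
      Submodule.subset_span ⟨Pi.single j 1, rfl⟩, rfl⟩, ?_⟩
    simp only [hsingle]
    intro hc
    exact hj (AddCircle.injective_toCircle (ne_of_gt h2π) (Subtype.coe_injective hc))
  -- Stone-Weierstrass
  have hSW := ContinuousMap.starSubalgebra_topologicalClosure_eq_top_of_separatesPoints A hsep
  have happrox : ∀ ε > 0, ∃ P, P ∈ M ∧ ∀ x, ‖F x - P x‖ ≤ ε := by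
    intro ε hε
    have hmem : (⟨F, hFcont⟩ : C((Fin d → AddCircle (2 * π)), ℂ)) ∈ A.topologicalClosure := by
      rw [hSW]; trivial
    have hcl : (⟨F, hFcont⟩ : C((Fin d → AddCircle (2 * π)), ℂ)) ∈
        closure (A : Set C((Fin d → AddCircle (2 * π)), ℂ)) := hmem
    rw [Metric.mem_closure_iff] at hcl
    obtain ⟨P, hP, hdist⟩ := hcl ε hε
    refine ⟨P, hP, fun x => ?_⟩
    have := ContinuousMap.dist_apply_le_dist (f := (⟨F, hFcont⟩ : C((Fin d → AddCircle (2 * π)), ℂ)))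
      (g := P) x
    rw [dist_eq_norm] at this
    exact le_trans (by exact this) hdist.le
  -- the averaging argument
  intro θ θ'
  have hcont_comp : ∀ (g : C((Fin d → AddCircle (2 * π)), ℂ)) (ψ : Fin d → ℝ),
      Continuous (fun τ : ℝ => g (q (ψ - τ • ω))) := by
    intro g ψ
    exact g.continuous.comp (hq_cont.comp (by fun_prop))
  have hFcont_comp : ∀ (ψ : Fin d → ℝ), Continuous (fun τ : ℝ => F (q (ψ - τ • ω))) := by
    intro ψ
    exact hFcont.comp (hq_cont.comp (by fun_prop))
  have hlim : ∀ P ∈ M, Filter.Tendsto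
      (fun T : ℝ => (T : ℝ)⁻¹ • ∫ τ in (0:ℝ)..T, (P (q (θ - τ • ω)) - P (q (θ' - τ • ω))))
      Filter.atTop (nhds 0) := by
    intro P hP
    induction hP using Submodule.span_induction with
    | mem g hg =>
      obtain ⟨k, rfl⟩ := hg
      set a : ℝ := ∑ j, (k j : ℝ) * ω j with ha
      have key : ∀ (ψ : Fin d → ℝ) (τ : ℝ), e k (q (ψ - τ • ω))
          = Complex.exp ((↑(∑ j, (k j : ℝ) * ψ j)) * Complex.I)
            * Complex.exp ((-(a:ℂ) * Complex.I) * (τ:ℂ)) := by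
        intro ψ τ
        have hsum : (∑ j, (k j : ℝ) * ((ψ - τ • ω) j))
            = (∑ j, (k j : ℝ) * ψ j) - τ * a := by
          rw [ha, Finset.mul_sum, ← Finset.sum_sub_distrib]
          refine Finset.sum_congr rfl fun j _ => ?_
          simp only [Pi.sub_apply, Pi.smul_apply, smul_eq_mul]
          ring
        rw [hek_q, hsum, ← Complex.exp_add]
        congr 1
        push_cast
        ring
      by_cases hk : k = 0
      · have hzero : ∀ T : ℝ, (∫ τ in (0:ℝ)..T,
            (e k (q (θ - τ • ω)) - e k (q (θ' - τ • ω)))) = 0 := by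
          intro T
          have : ∀ τ : ℝ, e k (q (θ - τ • ω)) - e k (q (θ' - τ • ω)) = 0 := by
            intro τ
            rw [key θ, key θ', hk]
            simp
          simp only [this]
          exact intervalIntegral.integral_zero
        simp only [hzero, smul_zero]
        exact tendsto_const_nhds
      · have ha0 : a ≠ 0 := fun h => hk (hω k h)
        set c : ℂ := -(a : ℂ) * Complex.I with hc
        have hc0 : c ≠ 0 := by
          rw [hc]
          simp [Complex.ext_iff, ha0]
        set B : ℂ := Complex.exp ((↑(∑ j, (k j : ℝ) * θ j)) * Complex.I) with hB
        set B' : ℂ := Complex.exp ((↑(∑ j, (k j : ℝ) * θ' j)) * Complex.I) with hB'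
        have hint : ∀ T : ℝ, (∫ τ in (0:ℝ)..T,
            (e k (q (θ - τ • ω)) - e k (q (θ' - τ • ω))))
            = (B - B') * ((Complex.exp (c * T) - 1) / c) := by
          intro T
          have eint : ∀ τ : ℝ, e k (q (θ - τ • ω)) - e k (q (θ' - τ • ω))
              = (B - B') * Complex.exp (c * (τ:ℂ)) := by
            intro τ
            rw [key θ, key θ']
            ring
          simp only [eint]
          rw [intervalIntegral.integral_const_mul, integral_exp_mul_complex hc0]
          rw [Complex.ofReal_zero, mul_zero, Complex.exp_zero]
        simp only [hint]
        apply squeeze_zero_norm' (a := fun T : ℝ => (‖B - B'‖ * (2 / ‖c‖)) / T)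
        · filter_upwards [Filter.eventually_ge_atTop (1:ℝ)] with T hT
          have hT0 : (0:ℝ) < T := lt_of_lt_of_le one_pos hT
          rw [norm_smul]
          have hexp : ‖Complex.exp (c * (T:ℂ)) - 1‖ ≤ 2 := by
            calc ‖Complex.exp (c * (T:ℂ)) - 1‖ ≤ ‖Complex.exp (c * (T:ℂ))‖ + ‖(1:ℂ)‖ :=
                  norm_sub_le _ _
              _ ≤ 2 := by
                  rw [Complex.norm_exp]
                  have : (c * (T:ℂ)).re = 0 := by
                    rw [hc]; simp [Complex.mul_re]
                  rw [this, Real.exp_zero]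
                  norm_num
          have h1 : ‖(B - B') * ((Complex.exp (c * (T:ℂ)) - 1) / c)‖
              ≤ ‖B - B'‖ * (2 / ‖c‖) := by
            rw [norm_mul, norm_div]
            gcongr
          have h2 : ‖(T:ℝ)⁻¹‖ = T⁻¹ := by
            rw [Real.norm_eq_abs, abs_of_pos (inv_pos.mpr hT0)]
          rw [h2, div_eq_inv_mul (‖B - B'‖ * (2 / ‖c‖)) T]
          exact mul_le_mul_of_nonneg_left h1 (inv_nonneg.mpr hT0.le)
        · exact Filter.Tendsto.div_atTop tendsto_const_nhds Filter.tendsto_id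
    | zero =>
      simp only [ContinuousMap.zero_apply, sub_self, intervalIntegral.integral_zero, smul_zero]
      exact tendsto_const_nhds
    | add u v hu hv ihu ihv =>
      have hsplit : ∀ T : ℝ, (∫ τ in (0:ℝ)..T, ((u + v) (q (θ - τ • ω)) - (u + v) (q (θ' - τ • ω))))
          = (∫ τ in (0:ℝ)..T, (u (q (θ - τ • ω)) - u (q (θ' - τ • ω))))
            + ∫ τ in (0:ℝ)..T, (v (q (θ - τ • ω)) - v (q (θ' - τ • ω))) := by
        intro T
        rw [← intervalIntegral.integral_add
          (f := fun τ => u (q (θ - τ • ω)) - u (q (θ' - τ • ω)))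
          (g := fun τ => v (q (θ - τ • ω)) - v (q (θ' - τ • ω)))
          (((hcont_comp u θ).sub (hcont_comp u θ')).intervalIntegrable 0 T)
          (((hcont_comp v θ).sub (hcont_comp v θ')).intervalIntegrable 0 T)]
        refine intervalIntegral.integral_congr fun τ _ => ?_
        simp only [ContinuousMap.add_apply]
        ring
      simp only [hsplit, smul_add]
      simpa using ihu.add ihv
    | smul r u hu ihu =>
      have hsplit : ∀ T : ℝ, (∫ τ in (0:ℝ)..T, ((r • u) (q (θ - τ • ω)) - (r • u) (q (θ' - τ • ω))))
          = r • ∫ τ in (0:ℝ)..T, (u (q (θ - τ • ω)) - u (q (θ' - τ • ω))) := by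
        intro T
        rw [← intervalIntegral.integral_smul]
        refine intervalIntegral.integral_congr fun τ _ => ?_
        simp only [ContinuousMap.smul_apply, smul_sub]
      simp only [hsplit]
      have : ∀ T : ℝ, (T:ℝ)⁻¹ • (r • ∫ τ in (0:ℝ)..T, (u (q (θ - τ • ω)) - u (q (θ' - τ • ω))))
          = r • ((T:ℝ)⁻¹ • ∫ τ in (0:ℝ)..T, (u (q (θ - τ • ω)) - u (q (θ' - τ • ω)))) := by
        intro T
        rw [smul_comm]
      simp only [this]
      simpa using ihu.const_smul r
  -- constancy of the average
  have hconstint : ∀ T : ℝ, 0 < T →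
      f θ - f θ' = (T:ℝ)⁻¹ • ∫ τ in (0:ℝ)..T, (F (q (θ - τ • ω)) - F (q (θ' - τ • ω))) := by
    intro T hT
    have hconst : ∀ τ : ℝ, F (q (θ - τ • ω)) - F (q (θ' - τ • ω)) = f θ - f θ' := by
      intro τ
      rw [hFq, hFq, hflow τ θ, hflow τ θ']
    simp only [hconst]
    rw [intervalIntegral.integral_const, sub_zero, smul_smul,
      inv_mul_cancel₀ (ne_of_gt hT), one_smul]
  -- the final estimate
  have hbound : ∀ ε > 0, ‖f θ - f θ'‖ ≤ 3 * ε := by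
    intro ε hε
    obtain ⟨P, hPM, hPappr⟩ := happrox ε hε
    obtain ⟨T, hTd, hT1⟩ :=
      ((Metric.tendsto_nhds.mp (hlim P hPM) ε hε).and (Filter.eventually_ge_atTop (1:ℝ))).exists
    have hT0 : (0:ℝ) < T := lt_of_lt_of_le one_pos hT1
    have hFi : IntervalIntegrable (fun τ : ℝ => F (q (θ - τ • ω)) - F (q (θ' - τ • ω)))
        MeasureTheory.volume 0 T := ((hFcont_comp θ).sub (hFcont_comp θ')).intervalIntegrable 0 T
    have hPi : IntervalIntegrable (fun τ : ℝ => P (q (θ - τ • ω)) - P (q (θ' - τ • ω)))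
        MeasureTheory.volume 0 T :=
      ((hcont_comp P θ).sub (hcont_comp P θ')).intervalIntegrable 0 T
    have hsplit : (∫ τ in (0:ℝ)..T, (F (q (θ - τ • ω)) - F (q (θ' - τ • ω))))
        = (∫ τ in (0:ℝ)..T, ((F (q (θ - τ • ω)) - F (q (θ' - τ • ω)))
            - (P (q (θ - τ • ω)) - P (q (θ' - τ • ω)))))
          + ∫ τ in (0:ℝ)..T, (P (q (θ - τ • ω)) - P (q (θ' - τ • ω))) := by
      rw [← intervalIntegral.integral_add (hFi.sub hPi) hPi]
      refine intervalIntegral.integral_congr fun τ _ => ?_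
      ring
    have hterm1 : ‖(T:ℝ)⁻¹ • ∫ τ in (0:ℝ)..T, ((F (q (θ - τ • ω)) - F (q (θ' - τ • ω)))
        - (P (q (θ - τ • ω)) - P (q (θ' - τ • ω))))‖ ≤ 2 * ε := by
      rw [norm_smul, Real.norm_eq_abs, abs_of_pos (inv_pos.mpr hT0)]
      have hptw : ∀ τ ∈ Set.uIoc (0:ℝ) T, ‖(F (q (θ - τ • ω)) - F (q (θ' - τ • ω)))
          - (P (q (θ - τ • ω)) - P (q (θ' - τ • ω)))‖ ≤ 2 * ε := by
        intro τ _
        have e1 : (F (q (θ - τ • ω)) - F (q (θ' - τ • ω)))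
            - (P (q (θ - τ • ω)) - P (q (θ' - τ • ω)))
            = (F (q (θ - τ • ω)) - P (q (θ - τ • ω)))
              - (F (q (θ' - τ • ω)) - P (q (θ' - τ • ω))) := by ring
        rw [e1]
        calc ‖(F (q (θ - τ • ω)) - P (q (θ - τ • ω)))
            - (F (q (θ' - τ • ω)) - P (q (θ' - τ • ω)))‖
            ≤ ‖F (q (θ - τ • ω)) - P (q (θ - τ • ω))‖
              + ‖F (q (θ' - τ • ω)) - P (q (θ' - τ • ω))‖ := norm_sub_le _ _
          _ ≤ ε + ε := add_le_add (hPappr _) (hPappr _)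
          _ = 2 * ε := by ring
      have hIle := intervalIntegral.norm_integral_le_of_norm_le_const hptw
      calc T⁻¹ * ‖∫ τ in (0:ℝ)..T, ((F (q (θ - τ • ω)) - F (q (θ' - τ • ω)))
          - (P (q (θ - τ • ω)) - P (q (θ' - τ • ω))))‖
          ≤ T⁻¹ * (2 * ε * |T - 0|) := mul_le_mul_of_nonneg_left hIle (inv_nonneg.mpr hT0.le)
        _ = 2 * ε := by
            rw [sub_zero, abs_of_pos hT0]
            field_simp
    have hterm2 : ‖(T:ℝ)⁻¹ • ∫ τ in (0:ℝ)..T,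
        (P (q (θ - τ • ω)) - P (q (θ' - τ • ω)))‖ < ε := by
      rw [dist_zero_right] at hTd
      exact hTd
    calc ‖f θ - f θ'‖
        = ‖(T:ℝ)⁻¹ • ∫ τ in (0:ℝ)..T, (F (q (θ - τ • ω)) - F (q (θ' - τ • ω)))‖ := by
          rw [← hconstint T hT0]
      _ = ‖(T:ℝ)⁻¹ • (∫ τ in (0:ℝ)..T, ((F (q (θ - τ • ω)) - F (q (θ' - τ • ω)))
            - (P (q (θ - τ • ω)) - P (q (θ' - τ • ω)))))
          + (T:ℝ)⁻¹ • ∫ τ in (0:ℝ)..T, (P (q (θ - τ • ω)) - P (q (θ' - τ • ω)))‖ := by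
          rw [hsplit, smul_add]
      _ ≤ ‖(T:ℝ)⁻¹ • ∫ τ in (0:ℝ)..T, ((F (q (θ - τ • ω)) - F (q (θ' - τ • ω)))
            - (P (q (θ - τ • ω)) - P (q (θ' - τ • ω))))‖
          + ‖(T:ℝ)⁻¹ • ∫ τ in (0:ℝ)..T, (P (q (θ - τ • ω)) - P (q (θ' - τ • ω)))‖ :=
          norm_add_le _ _
      _ ≤ 2 * ε + ε := add_le_add hterm1 hterm2.le
      _ = 3 * ε := by ring
  by_contra hne
  have h0 : 0 < ‖f θ - f θ'‖ := by
    rw [norm_pos_iff, sub_ne_zero]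
    exact hne
  have := hbound (‖f θ - f θ'‖ / 4) (by positivity)
  linarith

/-- Transport lemma: a smooth, `2π`-periodic-in-θ solution of
`∂z/∂τ + ω·∇_θ z = 0` with `z(0,θ₀)=0` that is polynomial in `τ`
(with θ-smooth coefficients) vanishes identically. -/
theorem transport_lemma {d : ℕ} (ω : Fin d → ℝ) (hω : Nonresonant ω)
    (z : ℝ → (Fin d → ℝ) → ℂ) (θ₀ : Fin d → ℝ)
    (hsmooth : ContDiff ℝ (⊤ : ℕ∞) (fun p : ℝ × (Fin d → ℝ) => z p.1 p.2))
    (hper : ∀ (τ : ℝ) (θ : Fin d → ℝ) (j : Fin d),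
      z τ (θ + (2 * π) • (Pi.single j 1 : Fin d → ℝ)) = z τ θ)
    (hpde : ∀ (τ : ℝ) (θ : Fin d → ℝ),
      HasDerivAt (fun s : ℝ => z (τ + s) (θ + s • ω)) 0 0)
    (hinit : z 0 θ₀ = 0)
    (hpoly : ∃ (N : ℕ) (c : Fin (N + 1) → (Fin d → ℝ) → ℂ),
      (∀ i, ContDiff ℝ (⊤ : ℕ∞) (c i)) ∧
      ∀ (τ : ℝ) (θ : Fin d → ℝ), z τ θ = ∑ i, c i θ * (τ : ℂ) ^ (i : ℕ)) :
    ∀ (τ : ℝ) (θ : Fin d → ℝ), z τ θ = 0 := by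
  obtain ⟨N, c, hc, hz⟩ := hpoly
  have h1 : ∀ τ θ, z τ θ = z 0 (θ - τ • ω) := char_const ω z hpde
  have hc₀cont : Continuous (z 0) := by
    have : Continuous fun θ : Fin d → ℝ => z 0 θ :=
      hsmooth.continuous.comp (continuous_const.prodMk continuous_id)
    exact this
  have hc₀per : ∀ θ j, z 0 (θ + (2 * π) • (Pi.single j 1 : Fin d → ℝ)) = z 0 θ :=
    fun θ j => hper 0 θ j
  obtain ⟨C, hC⟩ := periodic_bounded (z 0) hc₀cont hc₀per
  have hflow : ∀ (τ : ℝ) (θ : Fin d → ℝ), z 0 (θ - τ • ω) = z 0 θ := by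
    intro τ θ
    have hb : ∀ σ : ℝ, ‖∑ i, c i θ * (σ : ℂ) ^ (i : ℕ)‖ ≤ C := by
      intro σ
      rw [← hz σ θ, h1 σ θ]
      exact hC _
    have hcst := bounded_poly_const (fun i => c i θ) C hb τ
    calc z 0 (θ - τ • ω) = z τ θ := (h1 τ θ).symm
      _ = ∑ i, c i θ * (τ : ℂ) ^ (i : ℕ) := hz τ θ
      _ = ∑ i, c i θ * (0 : ℂ) ^ (i : ℕ) := hcst
      _ = z 0 θ := by rw [hz 0 θ]; push_cast; rfl
  have hconst := flow_invariant_const ω hω (z 0) hc₀cont hc₀per hflow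
  intro τ θ
  rw [h1 τ θ, hconst (θ - τ • ω) θ₀, hinit]
end

section
/- For a nonresonant vector v ∈ ℂ^d and a finitely additively generated monoid A with eigenvalue map ν : A → ℂ satisfying ν(ℓ+ℓ') = ν(ℓ)+ν(ℓ') and ν(ℓ) = 0 iff ℓ = 0 (where ν(ℓ) = v₁ν_{1,ℓ}+⋯+v_dν_{d,ℓ}): if a function z : ℝ × ℂ^d → ℂ is a finite linear combination of terms τ^k exp(ν_ℓ^u) (k ≥ 0, ℓ ∈ A) and satisfies ∂z/∂τ + v·∇_u z = 0 with z(0,0) = 0, then z is identically zero. -/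
/-!
A solution of the transport equation is constant along each characteristic `t ↦ (t, w + t v)`,
and on it `z` is the exponential polynomial `∑ c_{k,ℓ} e^{ν_ℓ^w} t^k e^{ν(ℓ) t}` in `t`. By linear
independence of the functions `t^k e^{λ t}`, the constant value is the coefficient of `t⁰ e^{0 t}`,
which by nonresonance is `∑_{k = 0, ℓ = 0} c_{k,ℓ}` whatever `w` is. So `z` is constant, hence
zero since `z(0,0) = 0`.
-/

open Polynomial

noncomputable section

namespace ExpPoly

def eval (Λ : Finset ℂ) (P : ℂ → ℂ[X]) (t : ℝ) : ℂ :=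
  ∑ l ∈ Λ, (P l).eval (t : ℂ) * Complex.exp (l * t)

/-- `d/dt (P(t) e^{a t}) = ((D + a) P)(t) e^{a t}`. -/
def derivAdd (a : ℂ) : ℂ[X] →ₗ[ℂ] ℂ[X] :=
  derivative + a • LinearMap.id

theorem derivAdd_apply (a : ℂ) (Q : ℂ[X]) : derivAdd a Q = derivative Q + a • Q := rfl

theorem derivAdd_zero : derivAdd 0 = derivative := by
  rw [derivAdd, zero_smul, add_zero]

theorem derivAdd_injective {a : ℂ} (ha : a ≠ 0) : Function.Injective (derivAdd a) := by
  refine (injective_iff_map_eq_zero _).2 fun Q hQ => ?_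
  by_contra hQ0
  have hdeg : (a • Q).degree = Q.degree := by
    rw [smul_eq_C_mul, degree_C_mul ha]
  have hlt : (derivative Q).degree < (a • Q).degree := hdeg ▸ degree_derivative_lt hQ0
  have := degree_add_eq_right_of_degree_lt hlt
  rw [← derivAdd_apply, hQ, degree_zero, hdeg] at this
  exact hQ0 (degree_eq_bot.1 this.symm)

theorem hasDerivAt_eval_mul_cexp (P : ℂ[X]) (l : ℂ) (t : ℝ) :
    HasDerivAt (fun s : ℝ => P.eval (s : ℂ) * Complex.exp (l * s))
      ((derivAdd l P).eval (t : ℂ) * Complex.exp (l * t)) t := by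
  refine ((P.hasDerivAt (t : ℂ)).fun_mul
    ((hasDerivAt_id' (t : ℂ)).const_mul l).cexp).comp_ofReal.congr_deriv ?_
  simp only [derivAdd_apply, eval_add, eval_smul, smul_eq_mul]
  ring

theorem hasDerivAt_eval (Λ : Finset ℂ) (P : ℂ → ℂ[X]) (t : ℝ) :
    HasDerivAt (eval Λ P) (eval Λ (fun l => derivAdd l (P l)) t) t := by
  unfold eval
  exact HasDerivAt.fun_sum fun l _ => hasDerivAt_eval_mul_cexp (P l) l t

theorem eval_derivAdd_sub (Λ : Finset ℂ) (P : ℂ → ℂ[X]) (l₀ : ℂ) (t : ℝ) :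
    eval Λ (fun l => derivAdd (l - l₀) (P l)) t
      = eval Λ (fun l => derivAdd l (P l)) t - l₀ * eval Λ P t := by
  simp only [eval, Finset.mul_sum, ← Finset.sum_sub_distrib, derivAdd_apply, eval_add,
    eval_smul, smul_eq_mul]
  exact Finset.sum_congr rfl fun _ _ => by ring

theorem eval_derivAdd_sub_eq_zero {Λ : Finset ℂ} {P : ℂ → ℂ[X]} (hP : eval Λ P = 0)
    (l₀ : ℂ) : eval Λ (fun l => derivAdd (l - l₀) (P l)) = 0 := by
  funext t
  have hderiv : eval Λ (fun l => derivAdd l (P l)) t = 0 :=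
    (hasDerivAt_eval Λ P t).unique (hP ▸ hasDerivAt_const t 0)
  rw [eval_derivAdd_sub, hderiv, hP, Pi.zero_apply, mul_zero, sub_zero]

theorem eval_iterate_derivAdd_sub_eq_zero {Λ : Finset ℂ} {P : ℂ → ℂ[X]} (hP : eval Λ P = 0)
    (l₀ : ℂ) (n : ℕ) : eval Λ (fun l => (derivAdd (l - l₀))^[n] (P l)) = 0 := by
  induction n with
  | zero => exact hP
  | succ n ih =>
    simpa only [Function.iterate_succ_apply'] using eval_derivAdd_sub_eq_zero ih l₀

theorem eval_erase_of_eq_zero {Λ : Finset ℂ} {P : ℂ → ℂ[X]} {l₀ : ℂ} (hl₀ : l₀ ∈ Λ)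
    (h : P l₀ = 0) : eval (Λ.erase l₀) P = eval Λ P := by
  funext t
  simp [eval, ← Finset.add_sum_erase _ _ hl₀, h]

theorem _root_.Polynomial.eq_zero_of_eval_ofReal_eq_zero {P : ℂ[X]}
    (h : ∀ t : ℝ, P.eval (t : ℂ) = 0) : P = 0 :=
  P.eq_zero_of_infinite_isRoot <|
    (Set.infinite_range_of_injective Complex.ofReal_injective).mono <| by
      rintro _ ⟨t, rfl⟩
      exact h t

/-- The functions `t ↦ t^k e^{λ t}` are linearly independent. -/
theorem eq_zero_of_eval_eq_zero {Λ : Finset ℂ} {P : ℂ → ℂ[X]} (hP : eval Λ P = 0) :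
    ∀ l ∈ Λ, P l = 0 := by
  induction Λ using Finset.strongInduction generalizing P with
  | H Λ IH =>
  rcases Λ.eq_empty_or_nonempty with rfl | ⟨l₀, hl₀⟩
  · simp
  -- `(D + (λ - λ₀))^N` with `N > deg P_{λ₀}` kills the `λ₀`-term and is injective on the others.
  set N := (P l₀).natDegree + 1
  have hkill : (derivAdd (l₀ - l₀))^[N] (P l₀) = 0 := by
    rw [sub_self, derivAdd_zero]
    exact iterate_derivative_eq_zero (Nat.lt_succ_self _)
  have hrest := IH _ (Finset.erase_ssubset hl₀)
    ((eval_erase_of_eq_zero hl₀ hkill).trans (eval_iterate_derivAdd_sub_eq_zero hP l₀ N))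
  have hne : ∀ l ∈ Λ.erase l₀, P l = 0 := fun l hl =>
    ((derivAdd_injective (sub_ne_zero.2 (Finset.ne_of_mem_erase hl))).iterate N).eq_iff.1 <| by
      rw [hrest l hl, iterate_map_zero]
  have h₀ : P l₀ = 0 := by
    refine eq_zero_of_eval_ofReal_eq_zero fun t => ?_
    have ht := congrFun hP t
    rw [eval, ← Finset.add_sum_erase _ _ hl₀, Pi.zero_apply,
      Finset.sum_eq_zero fun l hl => by rw [hne l hl, eval_zero, zero_mul], add_zero] at ht
    exact (mul_eq_zero.1 ht).resolve_right (Complex.exp_ne_zero _)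
  intro l hl
  by_cases h : l = l₀
  · exact h ▸ h₀
  · exact hne l (Finset.mem_erase.2 ⟨h, hl⟩)

theorem eval_sub (Λ : Finset ℂ) (P Q : ℂ → ℂ[X]) (t : ℝ) :
    eval Λ (P - Q) t = eval Λ P t - eval Λ Q t := by
  simp only [eval, Pi.sub_apply, Polynomial.eval_sub, sub_mul, Finset.sum_sub_distrib]

theorem eval_single_zero {Λ : Finset ℂ} (h₀ : 0 ∈ Λ) (Q : ℂ[X]) (t : ℝ) :
    eval Λ (Pi.single 0 Q) t = Q.eval (t : ℂ) := by
  rw [eval, Finset.sum_eq_single_of_mem 0 h₀ fun l _ hl => by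
    rw [Pi.single_eq_of_ne hl, Polynomial.eval_zero, zero_mul]]
  simp

theorem sum_eq_eval {ι : Type*} (S : Finset ι) (k : ι → ℕ) (μ a : ι → ℂ) {Λ : Finset ℂ}
    (hΛ : ∀ p ∈ S, μ p ∈ Λ) (t : ℝ) :
    ∑ p ∈ S, a p * (t : ℂ) ^ k p * Complex.exp (μ p * t)
      = eval Λ (fun l => ∑ p ∈ S with μ p = l, C (a p) * X ^ k p) t := by
  rw [eval, ← Finset.sum_fiberwise_of_maps_to hΛ]
  refine Finset.sum_congr rfl fun l _ => ?_
  rw [Polynomial.eval_finsetSum, Finset.sum_mul]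
  refine Finset.sum_congr rfl fun p hp => ?_
  rw [(Finset.mem_filter.1 hp).2]
  simp

theorem eq_sum_of_sum_eq_const {ι : Type*} {S : Finset ι} {k : ι → ℕ} {μ a : ι → ℂ} {c : ℂ}
    (h : ∀ t : ℝ, ∑ p ∈ S, a p * (t : ℂ) ^ k p * Complex.exp (μ p * t) = c) :
    c = ∑ p ∈ S with μ p = 0 ∧ k p = 0, a p := by
  set Λ := insert 0 (S.image μ)
  set P : ℂ → ℂ[X] := fun l => ∑ p ∈ S with μ p = l, C (a p) * X ^ k p
  have hzero : eval Λ (P - Pi.single (0 : ℂ) (C c)) = 0 := by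
    funext t
    rw [eval_sub, eval_single_zero (Finset.mem_insert_self _ _), ← sum_eq_eval S k μ a
      (fun p hp => Finset.mem_insert_of_mem (Finset.mem_image_of_mem μ hp)), h, eval_C,
      sub_self, Pi.zero_apply]
  have hP : P 0 = C c := by
    simpa [sub_eq_zero] using eq_zero_of_eval_eq_zero hzero 0 (Finset.mem_insert_self _ _)
  have := congrArg (coeff · 0) hP
  simp only [P, finsetSum_coeff, coeff_C_mul_X_pow, coeff_C_zero] at this
  rw [← this, ← Finset.filter_filter, ← Finset.sum_filter]
  simp only [@eq_comm ℕ 0]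

end ExpPoly

section Transport

variable {E F : Type*} [AddCommGroup E] [Module ℂ E] [NormedAddCommGroup F] [NormedSpace ℝ F]

theorem apply_add_smul_eq_of_hasDerivAt_zero {z : ℝ → E → F} {v : E}
    (hz : ∀ τ u, HasDerivAt (fun s : ℝ => z (τ + s) (u + (s : ℂ) • v)) 0 0) (τ t : ℝ) (u : E) :
    z (τ + t) (u + (t : ℂ) • v) = z τ u := by
  set g : ℝ → F := fun s => z (τ + s) (u + (s : ℂ) • v)
  have hg : ∀ t, HasDerivAt g 0 t := fun t => by
    have hshift : (fun s : ℝ => z (τ + t + s) (u + (t : ℂ) • v + (s : ℂ) • v))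
        = fun s => g (t + s) := by
      funext s
      simp only [g, add_assoc, Complex.ofReal_add, add_smul]
    have h := hz (τ + t) (u + (t : ℂ) • v)
    rw [hshift, ← sub_self t] at h
    simpa using h.comp_sub_const t t
  have hconst := is_const_of_deriv_eq_zero (fun t => (hg t).differentiableAt)
    (fun t => (hg t).deriv) t 0
  simpa [g] using hconst

end Transport

end

/-- Transport lemma, autonomous-perturbation version: a polynomially smooth
solution of `∂z/∂τ + v·∇_u z = 0` with `z(0,0)=0` vanishes identically. -/
theorem transport_lemma_monoid {d : ℕ} {A : Type*} [AddCommMonoid A]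
    (ν : Fin d → A → ℂ)
    (hν : ∀ (j : Fin d) (ℓ ℓ' : A), ν j (ℓ + ℓ') = ν j ℓ + ν j ℓ')
    (v : Fin d → ℂ)
    (hv : ∀ ℓ : A, (∑ j, v j * ν j ℓ) = 0 ↔ ℓ = 0)
    (z : ℝ → (Fin d → ℂ) → ℂ)
    (hpolysmooth : ∃ (S : Finset (ℕ × A)) (c : ℕ × A → ℂ),
      ∀ (τ : ℝ) (u : Fin d → ℂ),
        z τ u = ∑ p ∈ S, c p * (τ : ℂ) ^ p.1 * Complex.exp (∑ j, u j * ν j p.2))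
    (hpde : ∀ (τ : ℝ) (u : Fin d → ℂ),
      HasDerivAt (fun s : ℝ => z (τ + s) (u + (s : ℂ) • v)) 0 0)
    (hinit : z 0 0 = 0) :
    ∀ (τ : ℝ) (u : Fin d → ℂ), z τ u = 0 := by
  classical
  obtain ⟨S, c, hz⟩ := hpolysmooth
  have hν₀ : ∀ j, ν j 0 = 0 := fun j => by simpa using hν j 0 0
  suffices key : ∀ τ u, z τ u = ∑ p ∈ S with p.2 = 0 ∧ p.1 = 0, c p by
    intro τ u
    rw [key, ← key 0 0, hinit]
  intro τ u
  set w := u - (τ : ℂ) • v with hw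
  have hline : ∀ t : ℝ, ∑ p ∈ S, (c p * Complex.exp (∑ j, w j * ν j p.2)) * (t : ℂ) ^ p.1
      * Complex.exp ((∑ j, v j * ν j p.2) * t) = z τ u := fun t => by
    have hchar := apply_add_smul_eq_of_hasDerivAt_zero hpde τ (t - τ) u
    rw [add_sub_cancel, Complex.ofReal_sub, sub_smul,
      show u + ((t : ℂ) • v - (τ : ℂ) • v) = w + (t : ℂ) • v by rw [hw]; abel, hz] at hchar
    rw [← hchar]
    refine Finset.sum_congr rfl fun p _ => ?_
    simp only [Pi.add_apply, Pi.smul_apply, smul_eq_mul, add_mul, Finset.sum_add_distrib,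
      Complex.exp_add, Finset.sum_mul]
    ring_nf
  rw [ExpPoly.eq_sum_of_sum_eq_const hline]
  refine Finset.sum_congr (Finset.filter_congr fun p _ => by rw [hv]) fun p hp => ?_
  rw [(Finset.mem_filter.1 hp).2.1]
  simp [hν₀]
end
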